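/- arXiv:1611.07083 — 5 statements merged into one kernel-verified Lean document; each statement's English description precedes it below -/
import Mathlib

section
/- Let (V, E, entry, exit, B) be a kernel CFG. Suppose that (i) the entry node has no incoming edges, (ii) from every barrier there is a path to the exit node, and (iii) there exists at least one conditional barrier (a barrier that does not dominate exit). Then there exists a barrier u ∈ B together with two distinct barriers p₁ ≠ p₂ such that p₁ and p₂ are both immediate predecessor barriers of u (i.e., u has more than one immediate predecessor barrier in the reduced barrier CFG). -/
/-- A path of length `n` from `a` to `b` in the directed graph with edge
relation `E`: vertices `v 0 = a, v 1, …, v n = b` with an edge between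
consecutive vertices. -/
def IsPath {V : Type*} (E : V → V → Prop) (a b : V) (n : ℕ) (v : ℕ → V) : Prop :=
  v 0 = a ∧ v n = b ∧ ∀ i < n, E (v i) (v (i + 1))

/-- `d` dominates `w` (relative to `entry`): every path from `entry` to `w`
contains `d` among its vertices. -/
def Dominates {V : Type*} (E : V → V → Prop) (entry d w : V) : Prop :=
  ∀ n : ℕ, ∀ v : ℕ → V, IsPath E entry w n v → ∃ i ≤ n, v i = d

/-- A barrier-CFG edge from `p` to `q`: a path of length at least one from
`p` to `q` none of whose intermediate vertices is a barrier.  In that case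
`p` is an immediate predecessor barrier of `q`, and `q` an immediate
successor barrier of `p`. -/
def BarrierEdge {V : Type*} (E : V → V → Prop) (B : Set V) (p q : V) : Prop :=
  ∃ n : ℕ, ∃ v : ℕ → V, 1 ≤ n ∧ IsPath E p q n v ∧ ∀ i, 0 < i → i < n → v i ∉ B

/-- Auxiliary: a tail segment of a path whose intermediate vertices
(after position `j`) are not barriers gives a barrier edge. -/
lemma segment_barrierEdge {V : Type*} (E : V → V → Prop) (B : Set V)
    {m j : ℕ} {Q : ℕ → V} {a x : V}
    (hQ : IsPath E a x m Q) (hjm : j < m)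
    (hB : ∀ k, j < k → k < m → Q k ∉ B) :
    BarrierEdge E B (Q j) x := by
  refine ⟨m - j, fun i => Q (j + i), by omega, ⟨rfl, ?_, ?_⟩, ?_⟩
  · show Q (j + (m - j)) = x
    rw [Nat.add_sub_cancel' hjm.le]; exact hQ.2.1
  · intro i hi
    exact hQ.2.2 (j + i) (by omega)
  · intro i h0 hin
    exact hB (j + i) (by omega) (by omega)

/-- In a kernel CFG whose entry has no incoming edges, where every barrier
reaches the exit, if there is a conditional barrier (one not dominating exit)
then some barrier has more than one immediate predecessor barrier. -/
theorem stmt_0 {V : Type*} (E : V → V → Prop) (entry exit : V) (B : Set V)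
    (hentryB : entry ∈ B) (hexitB : exit ∈ B)
    (hNoIn : ∀ w : V, ¬ E w entry)
    (hReach : ∀ b ∈ B, ∃ n : ℕ, ∃ v : ℕ → V, IsPath E b exit n v)
    (hCond : ∃ c ∈ B, ¬ Dominates E entry c exit) :
    ∃ u ∈ B, ∃ p₁ ∈ B, ∃ p₂ ∈ B, p₁ ≠ p₂ ∧
      BarrierEdge E B p₁ u ∧ BarrierEdge E B p₂ u := by
  classical
  obtain ⟨c, hcB, hc⟩ := hCond
  unfold Dominates at hc
  push_neg at hc
  -- `P x` : there is a path from `entry` to `x` avoiding `c` entirely.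
  set P : V → Prop := fun x => ∃ n : ℕ, ∃ v : ℕ → V,
      IsPath E entry x n v ∧ ∀ i ≤ n, v i ≠ c with hP
  have key : ∀ m : ℕ, ∀ x, x ∈ B → ∀ Q : ℕ → V, IsPath E c x m Q → P x →
      (∃ u ∈ B, ∃ p₁ ∈ B, ∃ p₂ ∈ B, p₁ ≠ p₂ ∧
        BarrierEdge E B p₁ u ∧ BarrierEdge E B p₂ u) := by
    intro m
    induction m using Nat.strong_induction_on with
    | _ m IH =>
      intro x hxB Q hQ hPx
      obtain ⟨n, S, hS, hSnc⟩ := hPx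
      have hxc : x ≠ c := by
        have := hSnc n le_rfl
        rwa [hS.2.1] at this
      -- m ≥ 1
      have hm : 0 < m := by
        rcases Nat.eq_zero_or_pos m with h | h
        · exfalso; apply hxc; rw [← hQ.2.1, h, hQ.1]
        · exact h
      -- last barrier on Q strictly before x
      set j : ℕ := Nat.findGreatest (fun k => Q k ∈ B) (m - 1) with hj
      have hjB : Q j ∈ B := by
        rw [hj]
        exact Nat.findGreatest_spec (P := fun k => Q k ∈ B) (Nat.zero_le (m - 1))
          (show Q 0 ∈ B by rw [hQ.1]; exact hcB)
      have hjle : j ≤ m - 1 := Nat.findGreatest_le (m - 1)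
      have hjmax : ∀ k, j < k → k < m → Q k ∉ B := fun k h1 h2 =>
        Nat.findGreatest_is_greatest h1 (by omega)
      have hjm : j < m := by omega
      have hedge1 : BarrierEdge E B (Q j) x := segment_barrierEdge E B hQ hjm hjmax
      by_cases hPb : P (Q j)
      · -- recurse on the prefix of Q up to j
        exact IH j (by omega) (Q j) hjB Q ⟨hQ.1, rfl, fun i hi => hQ.2.2 i (by omega)⟩ hPb
      · -- x ≠ entry, so n ≥ 1
        have hn : 0 < n := by
          rcases Nat.eq_zero_or_pos n with h | h
          · exfalso
            have hxe : x = entry := by rw [← hS.2.1, h, hS.1]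
            have := hQ.2.2 (m - 1) (by omega)
            have hQm : Q (m - 1 + 1) = entry := by
              rw [show m - 1 + 1 = m by omega, hQ.2.1, hxe]
            rw [hQm] at this
            exact hNoIn _ this
          · exact h
        -- last barrier on S strictly before x
        set i : ℕ := Nat.findGreatest (fun k => S k ∈ B) (n - 1) with hi
        have hiB : S i ∈ B := by
          rw [hi]
          exact Nat.findGreatest_spec (P := fun k => S k ∈ B) (Nat.zero_le (n - 1))
            (show S 0 ∈ B by rw [hS.1]; exact hentryB)
        have hile : i ≤ n - 1 := Nat.findGreatest_le (n - 1)
        have himax : ∀ k, i < k → k < n → S k ∉ B := fun k h1 h2 =>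
          Nat.findGreatest_is_greatest h1 (by omega)
        have hin : i < n := by omega
        have hedge2 : BarrierEdge E B (S i) x := segment_barrierEdge E B hS hin himax
        have hPSi : P (S i) := by
          exact ⟨i, S, ⟨hS.1, rfl, fun k hk => hS.2.2 k (by omega)⟩,
            fun k hk => hSnc k (by omega)⟩
        have hne : Q j ≠ S i := by
          intro h
          exact hPb (h ▸ hPSi)
        exact ⟨x, hxB, Q j, hjB, S i, hiB, hne, hedge1, hedge2⟩
  obtain ⟨m, Q, hQ⟩ := hReach c hcB
  obtain ⟨n, S, hS, hSnc⟩ := hc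
  exact key m exit hexitB Q hQ ⟨n, S, hS, hSnc⟩
end

section
/- Let (V, E, entry, exit, B) be a kernel CFG. If a = v₀, v₁, …, vₙ = b is a path of length n ≥ 1 whose endpoints a and b are barriers, then there exist indices 0 = j₀ < j₁ < … < j_k = n with k ≥ 1 such that v_{j₀}, v_{j₁}, …, v_{j_k} are exactly the vertices of the path that are barriers, and for each 0 ≤ i < k there is a barrier-CFG edge from v_{j_i} to v_{j_{i+1}}. In particular, every path of length at least one between two barriers induces a path in the reduced barrier CFG between them, all of whose vertices occur on the original path. -/
/-!
Enumerate the barrier positions `i ≤ n` of the path in increasing order with `Nat.nth`.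
Since `v 0` and `v n` are barriers, the enumeration starts at `0` and reaches `n` after
as many steps as there are barrier positions below `n` (`Nat.nth_count`). No vertex strictly
between two consecutive positions is a barrier, so the segment of the path joining them
witnesses a barrier-CFG edge.
-/

namespace IsPath

variable {V : Type*} {E : V → V → Prop} {a b : V} {n : ℕ} {v : ℕ → V}

theorem segment (hv : IsPath E a b n v) {s t : ℕ} (hst : s ≤ t) (ht : t ≤ n) :
    IsPath E (v s) (v t) (t - s) (fun i => v (s + i)) := by
  obtain ⟨-, -, hE⟩ := hv
  refine ⟨rfl, by simp only [Nat.add_sub_cancel' hst], fun i hi => ?_⟩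
  simpa only [Nat.add_assoc] using hE (s + i) (by omega)

theorem barrierEdge (hv : IsPath E a b n v) (B : Set V) {s t : ℕ} (hst : s < t)
    (ht : t ≤ n) (hgap : ∀ i, s < i → i < t → v i ∉ B) : BarrierEdge E B (v s) (v t) :=
  ⟨t - s, fun i => v (s + i), by omega, hv.segment hst.le ht,
    fun i hi0 hit => hgap (s + i) (by omega) (by omega)⟩

end IsPath

theorem stmt_1_general {V : Type*} (E : V → V → Prop) (B : Set V)
    (a b : V) (n : ℕ) (v : ℕ → V)
    (hn : 1 ≤ n) (hpath : IsPath E a b n v) (ha : a ∈ B) (hb : b ∈ B) :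
    ∃ k : ℕ, 1 ≤ k ∧ ∃ j : ℕ → ℕ,
      j 0 = 0 ∧ j k = n ∧
      (∀ i < k, j i < j (i + 1)) ∧
      (∀ m ≤ k, j m ≤ n ∧ v (j m) ∈ B) ∧
      (∀ i ≤ n, v i ∈ B → ∃ m ≤ k, j m = i) ∧
      (∀ i < k, BarrierEdge E B (v (j i)) (v (j (i + 1)))) := by
  classical
  set p : ℕ → Prop := fun i => i ≤ n ∧ v i ∈ B
  have hp0 : p 0 := ⟨Nat.zero_le n, hpath.1 ▸ ha⟩
  have hpn : p n := ⟨le_rfl, hpath.2.1 ▸ hb⟩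
  have hlast : Nat.nth p (Nat.count p n) = n := Nat.nth_count hpn
  have hmono : ∀ i < Nat.count p n, Nat.nth p i < Nat.nth p (i + 1) := fun i hi =>
    Nat.nth_lt_nth' i.lt_succ_self fun hf => (Nat.succ_le_of_lt hi).trans_lt
      (Nat.count_lt_card hf hpn)
  have hmem : ∀ m ≤ Nat.count p n, p (Nat.nth p m) := fun m hm =>
    Nat.nth_mem_anti hm (by rwa [hlast])
  have hgap : ∀ i t, Nat.nth p i < t → t < Nat.nth p (i + 1) → ¬p t :=
    fun i t hit hti ht => hit.not_ge (Nat.le_nth_of_lt_nth_succ hti ht)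
  have hk : 1 ≤ Nat.count p n := Nat.count_strict_mono hp0 hn
  refine ⟨Nat.count p n, hk, Nat.nth p, Nat.nth_zero_of_zero hp0, hlast, hmono, hmem,
    fun i hi hiB => ⟨Nat.count p i, Nat.count_monotone p hi, Nat.nth_count ⟨hi, hiB⟩⟩,
    fun i hi => ?_⟩
  have hnext : Nat.nth p (i + 1) ≤ n := (hmem (i + 1) hi).1
  exact hpath.barrierEdge B (hmono i hi) hnext fun t hit hti htB =>
    hgap i t hit hti ⟨hti.le.trans hnext, htB⟩

/-- Every path of length at least one between two barriers induces a path in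
the reduced barrier CFG between them whose vertices are exactly the barriers
occurring on the original path. -/
theorem stmt_1 {V : Type*} (E : V → V → Prop) (entry exit : V) (B : Set V)
    (hentryB : entry ∈ B) (hexitB : exit ∈ B)
    (a b : V) (n : ℕ) (v : ℕ → V)
    (hn : 1 ≤ n) (hpath : IsPath E a b n v) (ha : a ∈ B) (hb : b ∈ B) :
    ∃ k : ℕ, 1 ≤ k ∧ ∃ j : ℕ → ℕ,
      j 0 = 0 ∧ j k = n ∧
      (∀ i < k, j i < j (i + 1)) ∧
      (∀ m ≤ k, j m ≤ n ∧ v (j m) ∈ B) ∧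
      (∀ i ≤ n, v i ∈ B → ∃ m ≤ k, j m = i) ∧
      (∀ i < k, BarrierEdge E B (v (j i)) (v (j (i + 1)))) :=
  stmt_1_general E B a b n v hn hpath ha hb
end

section
/- Let (V, E, entry, exit, B) be a kernel CFG and let C ⊆ B be a nonempty set of barriers with exit ∉ C, such that from every barrier in C there is a path to exit. Then there exist barriers c ∈ C and u ∈ B \ C such that there is a barrier-CFG edge from c to u. -/
/-- If `C` is a nonempty set of barriers not containing `exit`, each of which
reaches `exit`, then there is a barrier-CFG edge from some `c ∈ C` to some
barrier `u ∉ C`. -/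
theorem stmt_2 {V : Type*} (E : V → V → Prop) (entry exit : V) (B : Set V)
    (hentryB : entry ∈ B) (hexitB : exit ∈ B)
    (C : Set V) (hCB : C ⊆ B) (hCne : C.Nonempty) (hexitC : exit ∉ C)
    (hReach : ∀ c ∈ C, ∃ n : ℕ, ∃ v : ℕ → V, IsPath E c exit n v) :
    ∃ c ∈ C, ∃ u ∈ B, u ∉ C ∧ BarrierEdge E B c u := by
  classical
  have key : ∀ n : ℕ, ∀ c ∈ C, ∀ v : ℕ → V, IsPath E c exit n v →
      ∃ c ∈ C, ∃ u ∈ B, u ∉ C ∧ BarrierEdge E B c u := by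
    intro n
    induction n using Nat.strong_induction_on with
    | _ n ih =>
      intro c hc v hp
      obtain ⟨h0, hn, he⟩ := hp
      have hn0 : 0 < n := by
        rcases Nat.eq_zero_or_pos n with h | h
        · exfalso; apply hexitC; rw [← hn, h, h0]; exact hc
        · exact h
      have hP : ∃ j, 1 ≤ j ∧ j ≤ n ∧ v j ∈ B := ⟨n, hn0, le_refl n, hn ▸ hexitB⟩
      set j := Nat.find hP with hjdef
      obtain ⟨hj1, hjn, hjB⟩ := Nat.find_spec hP
      have hedge : BarrierEdge E B c (v j) :=
        ⟨j, v, hj1, ⟨h0, rfl, fun i hi => he i (lt_of_lt_of_le hi hjn)⟩,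
          fun i hi0 hij hiB => Nat.find_min hP hij ⟨hi0, le_trans hij.le hjn, hiB⟩⟩
      by_cases hjC : v j ∈ C
      · refine ih (n - j) (by omega) (v j) hjC (fun i => v (i + j)) ?_
        refine ⟨by simp, by show v (n - j + j) = exit; rw [Nat.sub_add_cancel hjn]; exact hn, fun i hi => ?_⟩
        have := he (i + j) (by omega)
        simpa [Nat.add_right_comm] using this
      · exact ⟨c, hc, v j, hjB, hjC, hedge⟩
  obtain ⟨c0, hc0⟩ := hCne
  obtain ⟨n, v, hpath⟩ := hReach c0 hc0
  exact key n c0 hc0 v hpath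
end

section
/- Let (V, E, entry, exit, B) be a kernel CFG in which the entry node has no incoming edges. Let u ∈ B be a barrier and suppose p ∈ B is the unique immediate predecessor barrier of u, i.e., there is a barrier-CFG edge from p to u and every barrier having a barrier-CFG edge to u equals p. Then p dominates u: every path from entry to u contains p. -/
/-- If the entry node has no incoming edges and `p` is the unique immediate
predecessor barrier of the barrier `u`, then `p` dominates `u`. -/
theorem stmt_3 {V : Type*} (E : V → V → Prop) (entry exit : V) (B : Set V)
    (hentryB : entry ∈ B) (hexitB : exit ∈ B)
    (hNoIn : ∀ w : V, ¬ E w entry)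
    (u : V) (hu : u ∈ B) (p : V) (hp : p ∈ B)
    (hEdge : BarrierEdge E B p u)
    (hUnique : ∀ q ∈ B, BarrierEdge E B q u → q = p) :
    Dominates E entry p u := by
  classical
  intro n v hpath
  obtain ⟨h0, hn, hstep⟩ := hpath
  -- n ≥ 1, since otherwise u = entry which has no incoming edges,
  -- contradicting the barrier edge p → u.
  rcases Nat.eq_zero_or_pos n with rfl | hn1
  · exfalso
    obtain ⟨m, w, hm1, ⟨hw0, hwm, hwstep⟩, _⟩ := hEdge
    have : E (w (m - 1)) (w m) := by
      have := hwstep (m - 1) (Nat.sub_lt hm1 one_pos)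
      rwa [Nat.sub_add_cancel hm1] at this
    have hue : u = entry := by rw [← hn, h0]
    rw [hwm, hue] at this
    exact hNoIn _ this
  -- take the greatest j ≤ n-1 with v j ∈ B
  set P : ℕ → Prop := fun i => v i ∈ B with hP
  set j := Nat.findGreatest P (n - 1) with hj
  have hjle : j ≤ n - 1 := Nat.findGreatest_le _
  have hjB : v j ∈ B := by
    have h0P : P 0 := by simp [hP, h0, hentryB]
    exact Nat.findGreatest_spec (Nat.zero_le _) h0P
  have hgr : ∀ k, j < k → k ≤ n - 1 → v k ∉ B := fun k hk hk' =>
    Nat.findGreatest_is_greatest hk hk'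
  -- barrier edge from v j to u
  have hBE : BarrierEdge E B (v j) u := by
    refine ⟨n - j, fun i => v (j + i), ?_, ⟨by simp, ?_, ?_⟩, ?_⟩
    · omega
    · show v (j + (n - j)) = u
      rw [Nat.add_sub_cancel' (by omega : j ≤ n), hn]
    · intro i hi
      exact hstep (j + i) (by omega)
    · intro i hi hi'
      exact hgr (j + i) (by omega) (by omega)
  have := hUnique (v j) hjB hBE
  exact ⟨j, by omega, this⟩
end

section
/- Let (V, E, entry, exit, B) be a kernel CFG and let b ∈ B be a barrier with b ≠ exit such that there is a path from b to exit. Then b has at least one immediate successor barrier: there exists a barrier s ∈ B with a barrier-CFG edge from b to s. -/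
/-- Every barrier other than `exit` from which `exit` is reachable has at
least one immediate successor barrier. -/
theorem stmt_6 {V : Type*} (E : V → V → Prop) (entry exit : V) (B : Set V)
    (hentryB : entry ∈ B) (hexitB : exit ∈ B)
    (b : V) (hb : b ∈ B) (hne : b ≠ exit)
    (hReach : ∃ n : ℕ, ∃ v : ℕ → V, IsPath E b exit n v) :
    ∃ s ∈ B, BarrierEdge E B b s := by
  classical
  obtain ⟨n, v, h0, hn, hE⟩ := hReach
  have hn1 : 1 ≤ n := by
    rcases Nat.eq_zero_or_pos n with h | h
    · subst h; exact absurd (h0 ▸ hn) hne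
    · exact h
  have hP : ∃ i, 0 < i ∧ i ≤ n ∧ v i ∈ B := ⟨n, hn1, le_rfl, hn ▸ hexitB⟩
  set i := Nat.find hP with hi
  obtain ⟨hipos, hile, hiB⟩ := Nat.find_spec hP
  refine ⟨v i, hiB, i, v, hipos, ⟨h0, rfl, fun j hj => hE j (lt_of_lt_of_le hj hile)⟩,
    fun j hj0 hji hjB => ?_⟩
  exact Nat.find_min hP hji ⟨hj0, le_of_lt (lt_of_lt_of_le hji hile), hjB⟩
end
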